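/- arXiv:1704.07083 — 5 statements merged into one kernel-verified Lean document; each statement's English description precedes it below -/
import Mathlib

section
/- For n ≥ 2 and integers d, s with d < sq and s > 0, define Δ_{d,s} = (s - max(floor((d+1)/q), 0))·q, C_{s,n-1} = {\vec{i}+q\vec{t} : \vec{i}∈[q]^{n-1}, |\vec{t}|<s}, and R_{d,s,n} = C_{s,n} \ I_{d,n} with I_{d,n} = {\vec{i}∈N^n : |\vec{i}|≤d}. Then Σ_{\vec{k} ∈ C_{s,n-1}} Δ_{d-|\vec{k}|, s-|\vec{k} div q|} ≤ (1 + max(floor(d/q)+1, 0)/s) · |R_{d,s,n}|. -/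
open MvPolynomial

noncomputable def mvHasseDeriv {σ R : Type*} [CommSemiring R] (s : σ →₀ ℕ)
    (F : MvPolynomial σ R) : MvPolynomial σ R :=
  MvPolynomial.coeff s
    (MvPolynomial.eval₂ (MvPolynomial.C.comp MvPolynomial.C)
      (fun i => MvPolynomial.C (MvPolynomial.X i) + MvPolynomial.X i) F)

noncomputable def Nuni {F : Type*} [Field F] (α : ℕ → F) (q i : ℕ) : Polynomial F :=
  ∏ j ∈ Finset.range i, (Polynomial.X - Polynomial.C (α (j % q)))

noncomputable def Nvec {F : Type*} [Field F] (α : ℕ → F) (q : ℕ) {n : ℕ}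
    (i : Fin n → ℕ) : MvPolynomial (Fin n) F :=
  ∏ ℓ, ∏ j ∈ Finset.range (i ℓ), (MvPolynomial.X ℓ - MvPolynomial.C (α (j % q)))

noncomputable def Eev {F : Type*} [Field F] (α : ℕ → F) (q : ℕ) {n : ℕ}
    (P : MvPolynomial (Fin n) F) (j : Fin n → ℕ) : F :=
  MvPolynomial.eval (fun ℓ => α (j ℓ % q))
    (mvHasseDeriv (Finsupp.equivFunOnFinite.symm fun ℓ => j ℓ / q) P)

noncomputable def Euni {F : Type*} [Field F] (α : ℕ → F) (q : ℕ)
    (P : Polynomial F) (j : ℕ) : F :=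
  (Polynomial.hasseDeriv (j / q) P).eval (α (j % q))

def Cset (q s m : ℕ) : Finset (Fin m → ℕ) :=
  (Fintype.piFinset fun _ => Finset.range (s * q)).filter fun v => (∑ ℓ, v ℓ / q) < s

def Rset (q : ℕ) (d : ℤ) (s m : ℕ) : Finset (Fin m → ℕ) :=
  (Cset q s m).filter fun v => d < ∑ ℓ, (v ℓ : ℤ)

def Δfun (q : ℕ) (d' s' : ℤ) : ℤ := (s' - max ((d' + 1).fdiv (q : ℤ)) 0) * (q : ℤ)

def supportedOn (F : Type*) [Field F] {n : ℕ} (I : Set (Fin n → ℕ)) :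
    Submodule F (MvPolynomial (Fin n) F) where
  carrier := {P | ∀ m ∈ P.support, ⇑m ∈ I}
  zero_mem' := by simp
  add_mem' := by
    intro a b ha hb m hm
    rcases Finset.mem_union.mp (MvPolynomial.support_add hm) with h | h
    · exact ha m h
    · exact hb m h
  smul_mem' := by
    intro c a ha m hm
    exact ha m (MvPolynomial.support_smul hm)


section Aux
open Finset
set_option maxHeartbeats 1000000


def hPf (q m : ℕ) : Finset (Fin m → ℕ) := Fintype.piFinset fun _ => Finset.range q

def hcard (q m : ℕ) (τ : ℤ) : ℕ := ((hPf q m).filter fun i => τ < ∑ ℓ, (i ℓ : ℤ)).card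

lemma hPf_card (q m : ℕ) : (hPf q m).card = q ^ m := by
  simp [hPf, Fintype.card_piFinset]

lemma hcard_anti (q m : ℕ) {τ τ' : ℤ} (h : τ ≤ τ') : hcard q m τ' ≤ hcard q m τ := by
  apply Finset.card_le_card
  apply Finset.monotone_filter_right
  intro i _ hi
  exact lt_of_le_of_lt h hi

lemma hcard_le (q m : ℕ) (τ : ℤ) : hcard q m τ ≤ q ^ m := by
  rw [← hPf_card q m]; exact Finset.card_filter_le _ _

lemma hcard_neg (q m : ℕ) {τ : ℤ} (h : τ < 0) : hcard q m τ = q ^ m := by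
  rw [← hPf_card q m]
  unfold hcard
  congr 1
  apply Finset.filter_true_of_mem
  intro i _
  exact lt_of_lt_of_le h (by positivity)

lemma hcard_slice (q m : ℕ) (τ : ℤ) :
    hcard q (m + 1) τ = ∑ x ∈ range q, hcard q m (τ - x) := by
  classical
  unfold hcard
  rw [← Finset.card_sigma]
  have hi : ∀ v ∈ (hPf q (m+1)).filter (fun i => τ < ∑ ℓ, (i ℓ : ℤ)),
      (⟨v 0, Fin.tail v⟩ : Σ _ : ℕ, Fin m → ℕ) ∈
        (range q).sigma fun x => (hPf q m).filter fun i => τ - x < ∑ ℓ, (i ℓ : ℤ) := by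
    intro v hv
    simp only [Finset.mem_filter, hPf, Fintype.mem_piFinset, Finset.mem_range] at hv
    simp only [Finset.mem_sigma, Finset.mem_filter, hPf, Fintype.mem_piFinset,
      Finset.mem_range]
    refine ⟨hv.1 0, fun a => hv.1 a.succ, ?_⟩
    have h1 := hv.2
    rw [Fin.sum_univ_succ] at h1
    have h2 : ∑ ℓ : Fin m, (Fin.tail v ℓ : ℤ) = ∑ ℓ : Fin m, (v ℓ.succ : ℤ) := rfl
    rw [h2]; linarith
  have hj : ∀ p ∈ (range q).sigma (fun x => (hPf q m).filter fun i => τ - x < ∑ ℓ, (i ℓ : ℤ)),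
      Fin.cons p.1 p.2 ∈ (hPf q (m+1)).filter fun i => τ < ∑ ℓ, (i ℓ : ℤ) := by
    intro p hp
    simp only [Finset.mem_sigma, Finset.mem_filter, hPf, Fintype.mem_piFinset,
      Finset.mem_range] at hp
    simp only [Finset.mem_filter, hPf, Fintype.mem_piFinset, Finset.mem_range]
    constructor
    · intro a
      refine Fin.cases ?_ ?_ a
      · simpa using hp.1
      · intro i; simpa using hp.2.1 i
    · rw [Fin.sum_univ_succ]
      simp only [Fin.cons_zero, Fin.cons_succ]
      have := hp.2.2
      linarith
  refine Finset.card_bij' (fun v _ => (⟨v 0, Fin.tail v⟩ : Σ _ : ℕ, Fin m → ℕ))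
    (fun p _ => Fin.cons p.1 p.2) hi hj ?_ ?_
  · intro v _; exact Fin.cons_self_tail v
  · intro p _
    refine Sigma.ext ?_ ?_
    · simp
    · simp [Fin.tail_cons]

lemma hcard_zero (q : ℕ) (σ : ℤ) : hcard q 0 σ = if σ < 0 then 1 else 0 := by
  unfold hcard
  split_ifs with h
  · rw [Finset.filter_true_of_mem, hPf_card, pow_zero]
    intro i _
    simpa using h
  · rw [Finset.filter_false_of_mem, Finset.card_empty]
    intro i _
    simpa using h

lemma hcard_one (q : ℕ) (τ : ℤ) : hcard q 1 τ = q - (τ + 1).toNat := by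
  rw [hcard_slice]
  have h1 : ∀ x ∈ range q, hcard q 0 (τ - x) = if τ < (x : ℤ) then 1 else 0 := by
    intro x _
    rw [hcard_zero]
    congr 1
    simp only [eq_iff_iff]
    omega
  rw [Finset.sum_congr rfl h1, ← Finset.card_filter]
  have : (Finset.range q).filter (fun x : ℕ => τ < (x : ℤ)) = Finset.Ico (τ + 1).toNat q := by
    ext x
    simp only [Finset.mem_filter, Finset.mem_range, Finset.mem_Ico]
    omega
  rw [this, Nat.card_Ico]

lemma aplus_base (q : ℕ) {τ₀ : ℤ} (h : τ₀ ≤ 0) :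
    q * (hcard q 1 τ₀ + hcard q 1 (τ₀ + q)) ≤ 2 * ∑ j ∈ range q, hcard q 1 (τ₀ + j) := by
  obtain ⟨a, rfl⟩ : ∃ a : ℕ, τ₀ = -(a : ℤ) := ⟨(-τ₀).toNat, by omega⟩
  have e1 : hcard q 1 (-(a:ℤ)) = q - (1 - a) := by rw [hcard_one]; congr 1; omega
  have e2 : hcard q 1 (-(a:ℤ) + q) = q - (q + 1 - a) := by rw [hcard_one]; congr 1; omega
  have e3 : ∀ j ∈ range q, hcard q 1 (-(a:ℤ) + j) = (q - 1 - j) + min a (j + 1) := by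
    intro j hj
    simp only [mem_range] at hj
    rw [hcard_one]
    omega
  rw [e1, e2, Finset.sum_congr rfl e3, Finset.sum_add_distrib,
    Finset.sum_range_reflect (fun j => j) q]
  have hpq : min a q ≤ q := min_le_right _ _
  have hsplit := Finset.sum_Ico_consecutive (fun j => min a (j + 1))
    (Nat.zero_le (min a q)) hpq
  rw [← Finset.range_eq_Ico, ← Finset.range_eq_Ico] at hsplit
  have h1 : ∀ j ∈ range (min a q), min a (j + 1) = j + 1 := by
    intro j hj; simp only [mem_range] at hj; omega
  have h2 : ∀ j ∈ Ico (min a q) q, min a (j + 1) = a := by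
    intro j hj; simp only [mem_Ico] at hj; omega
  rw [← hsplit, Finset.sum_congr rfl h1, Finset.sum_congr rfl h2, Finset.sum_const,
    Nat.card_Ico, smul_eq_mul]
  have h3 : ∑ j ∈ range (min a q), (j + 1) = ∑ j ∈ range (min a q + 1), j := by
    rw [Finset.sum_range_succ' (fun j => j) (min a q)]; omega
  rw [h3]
  have g1 := Finset.sum_range_id_mul_two q
  have g2 := Finset.sum_range_id_mul_two (min a q + 1)
  rcases Nat.eq_zero_or_pos q with rfl | hq
  · simp
  obtain ⟨c, rfl⟩ : ∃ c, q = c + 1 := ⟨q - 1, by omega⟩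
  have ec : c + 1 - 1 = c := by omega
  have ec2 : min a (c+1) + 1 - 1 = min a (c+1) := by omega
  rw [ec] at g1
  rw [ec2] at g2
  rcases le_or_gt a (c + 1) with hle | hlt
  · have hpa : min a (c + 1) = a := by omega
    rw [hpa] at g2 ⊢
    rcases Nat.eq_zero_or_pos a with rfl | ha
    · have s1 : c + 1 - (1 - 0) = c := by omega
      have s2 : c + 1 - (c + 1 + 1 - 0) = 0 := by omega
      rw [s1, s2]
      simp
      nlinarith [g1]
    obtain ⟨b, rfl⟩ : ∃ b, a = b + 1 := ⟨a - 1, by omega⟩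
    have s1 : c + 1 - (1 - (b + 1)) = c + 1 := by omega
    have s2 : c + 1 - (c + 1 + 1 - (b + 1)) = b := by omega
    have s3 : c + 1 - (b + 1) = c - b := by omega
    obtain ⟨r, hr⟩ : ∃ r, c = b + r := ⟨c - b, by omega⟩
    subst hr
    have s4 : b + r + 1 - (b + 1) = r := by omega
    rw [s1, s2, s4]
    nlinarith [g1, g2]
  · have hpa : min a (c + 1) = c + 1 := by omega
    rw [hpa] at g2 ⊢
    have s1 : c + 1 - (1 - a) = c + 1 := by omega
    have s2 : c + 1 - (c + 1 + 1 - a) = c + 1 := by omega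
    have s3 : c + 1 - (c + 1) = 0 := by omega
    rw [s1, s2, s3]
    nlinarith [g1, g2]

lemma aplus (q : ℕ) (m : ℕ) (hm : 1 ≤ m) {τ₀ : ℤ} (h : τ₀ ≤ 0) :
    q * (hcard q m τ₀ + hcard q m (τ₀ + q)) ≤ 2 * ∑ j ∈ range q, hcard q m (τ₀ + j) := by
  induction m, hm using Nat.le_induction generalizing τ₀ with
  | base => exact aplus_base q h
  | succ m hm ih =>
    rw [hcard_slice, hcard_slice]
    have hr : ∀ j ∈ range q, hcard q (m+1) (τ₀ + j) = ∑ x ∈ range q, hcard q m (τ₀ - x + j) := by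
      intro j _
      rw [hcard_slice]
      apply Finset.sum_congr rfl
      intro x _
      congr 1
      ring
    rw [Finset.sum_congr rfl hr, Finset.sum_comm]
    rw [← Finset.sum_add_distrib, Finset.mul_sum, Finset.mul_sum]
    apply Finset.sum_le_sum
    intro x _
    have hx : τ₀ - x ≤ 0 := by
      have : (0:ℤ) ≤ x := Int.natCast_nonneg x
      omega
    have h2 := ih hx
    calc q * (hcard q m (τ₀ - x) + hcard q m (τ₀ + q - x))
        = q * (hcard q m (τ₀ - x) + hcard q m (τ₀ - x + q)) := by ring_nf
      _ ≤ 2 * ∑ j ∈ range q, hcard q m (τ₀ - x + j) := h2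

lemma hcard_congr (q m : ℕ) {τ τ' : ℤ} (h : τ = τ') : hcard q m τ = hcard q m τ' := by rw [h]

lemma Bv_reflect (q m e u : ℕ) (hq : 0 < q) :
    ∑ j ∈ range q, hcard q m (((e:ℤ) + 1 - q * ((u:ℤ) + 1)) + j)
      = ∑ j ∈ range q, hcard q m ((e:ℤ) - q * (u:ℤ) - j) := by
  rw [← Finset.sum_range_reflect (fun j => hcard q m ((e:ℤ) - q * (u:ℤ) - j)) q]
  apply Finset.sum_congr rfl
  intro j hj
  simp only [mem_range] at hj
  apply hcard_congr
  push_cast [Nat.cast_sub (by omega : j ≤ q - 1), Nat.cast_sub (by omega : 1 ≤ q)]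
  ring

lemma qh_le_Bv (q m e : ℕ) (u : ℤ) :
    q * hcard q m ((e:ℤ) + 1 - q * (u + 1))
      ≤ ∑ j ∈ range q, hcard q m ((e:ℤ) - q * (u+1) - j) := by
  calc q * hcard q m ((e:ℤ) + 1 - q * (u + 1))
      = ∑ _j ∈ range q, hcard q m ((e:ℤ) + 1 - q * (u + 1)) := by
        rw [Finset.sum_const, Finset.card_range, smul_eq_mul]
    _ ≤ ∑ j ∈ range q, hcard q m ((e:ℤ) - q * (u+1) - j) := by
        apply Finset.sum_le_sum
        intro j hj
        apply hcard_anti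
        have : (0:ℤ) ≤ (j:ℤ) := Int.natCast_nonneg j
        linarith

lemma Bv_le (q m e : ℕ) (u : ℤ) :
    (∑ j ∈ range q, hcard q m ((e:ℤ) - q * u - j)) ≤ q * q ^ m := by
  calc ∑ j ∈ range q, hcard q m ((e:ℤ) - q * u - j)
      ≤ ∑ _j ∈ range q, q ^ m := Finset.sum_le_sum (fun j _ => hcard_le q m _)
    _ = q * q ^ m := by rw [Finset.sum_const, Finset.card_range, smul_eq_mul]

lemma gadget (q m e E : ℕ) (hq : 0 < q) (hm : 1 ≤ m) (hqD : e + 1 ≤ q * (E + 1))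
    (N : ℕ → ℕ) (hNmono : ∀ u v : ℕ, u ≤ v → v ≤ E → N u ≤ N v) :
    q * ∑ u ∈ range (E+1), N u * hcard q m ((e:ℤ) + 1 - q * ((u:ℤ) + 1))
      ≤ (∑ u ∈ Ico 1 E, N u * ∑ j ∈ range q, hcard q m ((e:ℤ) - q * (u:ℤ) - j))
        + 2 * (N E * ∑ j ∈ range q, hcard q m ((e:ℤ) - q * (E:ℤ) - j)) := by
  have htau0 : (e:ℤ) + 1 - q * ((E:ℤ) + 1) ≤ 0 := by
    have h1 : ((e:ℤ)) + 1 ≤ (q:ℤ) * ((E:ℤ)+1) := by exact_mod_cast hqD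
    linarith
  rcases Nat.eq_zero_or_pos E with rfl | hEpos
  · -- D = 1
    have hIco : Ico 1 0 = (∅ : Finset ℕ) := by simp
    rw [hIco]
    simp only [Finset.sum_range_one, Finset.sum_empty, zero_add, Nat.cast_zero]
    have hap := aplus q m hm (τ₀ := (e:ℤ) + 1 - q * ((0:ℤ) + 1))
      (by simpa using htau0)
    have hrefl := Bv_reflect q m e 0 hq
    simp only [Nat.cast_zero] at hrefl
    calc q * (N 0 * hcard q m ((e:ℤ) + 1 - q * ((0:ℤ) + 1)))
        = N 0 * (q * hcard q m ((e:ℤ) + 1 - q * ((0:ℤ) + 1))) := by ring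
      _ ≤ N 0 * (q * (hcard q m ((e:ℤ) + 1 - q * ((0:ℤ) + 1))
            + hcard q m (((e:ℤ) + 1 - q * ((0:ℤ) + 1)) + q))) := by
          apply Nat.mul_le_mul_left
          apply Nat.mul_le_mul_left
          exact Nat.le_add_right _ _
      _ ≤ N 0 * (2 * ∑ j ∈ range q, hcard q m (((e:ℤ) + 1 - q * ((0:ℤ) + 1)) + j)) :=
          Nat.mul_le_mul_left _ hap
      _ = 2 * (N 0 * ∑ j ∈ range q, hcard q m ((e:ℤ) - q * (0:ℤ) - j)) := by rw [hrefl]; ring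
  · -- E = F + 1
    obtain ⟨F, rfl⟩ : ∃ F, E = F + 1 := ⟨E - 1, by omega⟩
    rw [Finset.sum_range_succ, Finset.sum_range_succ]
    -- part 1 : shift blocks
    have part1 : q * ∑ u ∈ range F, N u * hcard q m ((e:ℤ) + 1 - q * ((u:ℤ) + 1))
        ≤ ∑ u ∈ Ico 1 (F+1), N u * ∑ j ∈ range q, hcard q m ((e:ℤ) - q * (u:ℤ) - j) := by
      rw [Finset.mul_sum, Finset.sum_Ico_eq_sum_range]
      simp only [Nat.add_sub_cancel]
      apply Finset.sum_le_sum
      intro u hu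
      simp only [mem_range] at hu
      calc q * (N u * hcard q m ((e:ℤ) + 1 - q * ((u:ℤ) + 1)))
          = N u * (q * hcard q m ((e:ℤ) + 1 - q * ((u:ℤ) + 1))) := by ring
        _ ≤ N (1 + u) * (q * hcard q m ((e:ℤ) + 1 - q * ((u:ℤ) + 1))) := by
            apply Nat.mul_le_mul_right
            exact hNmono u (1 + u) (by omega) (by omega)
        _ ≤ N (1 + u) * ∑ j ∈ range q, hcard q m ((e:ℤ) - q * ((u:ℤ)+1) - j) :=
            Nat.mul_le_mul_left _ (qh_le_Bv q m e (u:ℤ))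
        _ = N (1 + u) * ∑ j ∈ range q, hcard q m ((e:ℤ) - q * ((1+u : ℕ):ℤ) - j) := by
            congr 1
            apply Finset.sum_congr rfl
            intro j _
            apply hcard_congr
            push_cast; ring
    -- part 2 : two top blocks, A+ gadget
    have part2 : q * (N F * hcard q m ((e:ℤ) + 1 - q * ((F:ℤ) + 1)))
          + q * (N (F+1) * hcard q m ((e:ℤ) + 1 - q * (((F+1:ℕ):ℤ) + 1)))
        ≤ 2 * (N (F+1) * ∑ j ∈ range q, hcard q m ((e:ℤ) - q * ((F+1:ℕ):ℤ) - j)) := by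
      set τ₀ : ℤ := (e:ℤ) + 1 - q * (((F+1:ℕ):ℤ) + 1) with hτ₀
      have ht0 : τ₀ ≤ 0 := by
        rw [hτ₀]
        push_cast at htau0 ⊢
        linarith
      have hA := aplus q m hm ht0
      have he1 : (e:ℤ) + 1 - q * ((F:ℤ) + 1) = τ₀ + q := by rw [hτ₀]; push_cast; ring
      have he2 : ∑ j ∈ range q, hcard q m (τ₀ + j)
          = ∑ j ∈ range q, hcard q m ((e:ℤ) - q * ((F+1:ℕ):ℤ) - j) := by
        rw [← Bv_reflect q m e (F+1) hq]
      rw [he1]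
      calc q * (N F * hcard q m (τ₀ + q)) + q * (N (F+1) * hcard q m τ₀)
          ≤ q * (N (F+1) * hcard q m (τ₀ + q)) + q * (N (F+1) * hcard q m τ₀) := by
            apply Nat.add_le_add_right
            apply Nat.mul_le_mul_left
            apply Nat.mul_le_mul_right
            exact hNmono F (F+1) (by omega) (by omega)
        _ = N (F+1) * (q * (hcard q m τ₀ + hcard q m (τ₀ + q))) := by ring
        _ ≤ N (F+1) * (2 * ∑ j ∈ range q, hcard q m (τ₀ + j)) := Nat.mul_le_mul_left _ hA
        _ = 2 * (N (F+1) * ∑ j ∈ range q, hcard q m ((e:ℤ) - q * ((F+1:ℕ):ℤ) - j)) := by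
            rw [he2]; ring
    calc q * (∑ u ∈ range F, N u * hcard q m ((e:ℤ) + 1 - q * ((u:ℤ) + 1))
            + N F * hcard q m ((e:ℤ) + 1 - q * ((F:ℤ) + 1))
            + N (F+1) * hcard q m ((e:ℤ) + 1 - q * (((F+1:ℕ):ℤ) + 1)))
        = q * ∑ u ∈ range F, N u * hcard q m ((e:ℤ) + 1 - q * ((u:ℤ) + 1))
          + (q * (N F * hcard q m ((e:ℤ) + 1 - q * ((F:ℤ) + 1)))
            + q * (N (F+1) * hcard q m ((e:ℤ) + 1 - q * (((F+1:ℕ):ℤ) + 1)))) := by ring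
      _ ≤ (∑ u ∈ Ico 1 (F+1), N u * ∑ j ∈ range q, hcard q m ((e:ℤ) - q * (u:ℤ) - j))
          + 2 * (N (F+1) * ∑ j ∈ range q, hcard q m ((e:ℤ) - q * ((F+1:ℕ):ℤ) - j)) :=
          Nat.add_le_add part1 part2

lemma main_ineq (q m s e : ℕ) (hq : 0 < q) (hm : 1 ≤ m) (hs : 0 < s) (he : e < s * q)
    (N : ℕ → ℕ) (hN : ∀ u v : ℕ, u ≤ v → v < s → N u ≤ N v) :
    s * (q * ∑ u ∈ range s, N u * hcard q m ((e:ℤ) + 1 - q * ((u:ℤ) + 1)))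
      ≤ (s + (e / q + 1)) * ∑ u ∈ range s, N u * ∑ j ∈ range q, hcard q m ((e:ℤ) - q * (u:ℤ) - j) := by
  obtain ⟨E, hE⟩ : ∃ E, e / q + 1 = E + 1 := ⟨e / q, rfl⟩
  rw [hE]
  have hqD : e + 1 ≤ q * (E + 1) := by
    have h1 := Nat.div_add_mod e q
    have h2 := Nat.mod_lt e hq
    have h3 : q * (E + 1) = q * (e / q) + q := by rw [← hE]; ring
    linarith
  have hDs : E + 1 ≤ s := by
    have : e / q < s := by rw [Nat.div_lt_iff_lt_mul hq]; exact he
    omega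
  obtain ⟨t, hst⟩ : ∃ t, s = (E + 1) + t := ⟨s - (E+1), by omega⟩
  have hq' : (0:ℤ) < (q:ℤ) := by exact_mod_cast hq
  have hc1 : ((e:ℤ)) + 1 ≤ (q:ℤ) * ((E:ℤ) + 1) := by exact_mod_cast hqD
  have hsplit : ∀ f : ℕ → ℕ, ∑ u ∈ range s, f u
      = ∑ u ∈ range (E+1), f u + ∑ u ∈ Ico (E+1) s, f u := by
    intro f
    simp only [Finset.range_eq_Ico]
    exact (Finset.sum_Ico_consecutive f (Nat.zero_le _) hDs).symm
  have hhigh : ∀ u ∈ Ico (E+1) s, N u * hcard q m ((e:ℤ) + 1 - q * ((u:ℤ) + 1))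
      = N u * q ^ m := by
    intro u hu
    simp only [mem_Ico] at hu
    congr 1
    apply hcard_neg
    have c2 : (q:ℤ) * ((E:ℤ)+1) ≤ (q:ℤ) * (u:ℤ) := by
      apply mul_le_mul_of_nonneg_left _ (by positivity)
      have : ((E:ℤ)+1) ≤ (u:ℤ) := by exact_mod_cast hu.1
      linarith
    nlinarith
  have hBhigh : ∀ u ∈ Ico (E+1) s, N u * (∑ j ∈ range q, hcard q m ((e:ℤ) - q * (u:ℤ) - j))
      = N u * (q * q ^ m) := by
    intro u hu
    simp only [mem_Ico] at hu
    congr 1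
    have hall : ∀ j ∈ range q, hcard q m ((e:ℤ) - q * (u:ℤ) - j) = q ^ m := by
      intro j hj
      apply hcard_neg
      have c2 : (q:ℤ) * ((E:ℤ)+1) ≤ (q:ℤ) * (u:ℤ) := by
        apply mul_le_mul_of_nonneg_left _ (by positivity)
        have : ((E:ℤ)+1) ≤ (u:ℤ) := by exact_mod_cast hu.1
        linarith
      have c3 : (0:ℤ) ≤ (j:ℤ) := Int.natCast_nonneg j
      linarith
    rw [Finset.sum_congr rfl hall, Finset.sum_const, Finset.card_range, smul_eq_mul]
  rw [hsplit (fun u => N u * hcard q m ((e:ℤ) + 1 - q * ((u:ℤ) + 1))),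
    hsplit (fun u => N u * ∑ j ∈ range q, hcard q m ((e:ℤ) - q * (u:ℤ) - j)),
    Finset.sum_congr rfl hhigh, Finset.sum_congr rfl hBhigh, ← Finset.sum_mul, ← Finset.sum_mul]
  set A := ∑ u ∈ range (E+1), N u * hcard q m ((e:ℤ) + 1 - q * ((u:ℤ) + 1)) with hA
  set Bs := ∑ u ∈ range (E+1), N u * ∑ j ∈ range q, hcard q m ((e:ℤ) - q * (u:ℤ) - j) with hBs
  set Ch := ∑ u ∈ Ico (E+1) s, N u with hCh
  have core : s * (q * A) ≤ (s + (E+1)) * Bs + ((E+1) * (q * q ^ m)) * Ch := by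
    have hg := gadget q m e E hq hm hqD N (fun u v huv hv => hN u v huv (by omega))
    set S1 := ∑ u ∈ Ico 1 E, N u * ∑ j ∈ range q, hcard q m ((e:ℤ) - q * (u:ℤ) - j) with hS1
    set NB := N E * ∑ j ∈ range q, hcard q m ((e:ℤ) - q * (E:ℤ) - j) with hNB
    have hU : S1 + NB ≤ Bs := by
      rcases Nat.eq_zero_or_pos E with rfl | hEpos
      · have h0 : Ico 1 0 = (∅ : Finset ℕ) := by simp
        rw [hS1, h0, Finset.sum_empty, Nat.zero_add, hNB, hBs, Finset.sum_range_one]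
      · obtain ⟨F, rfl⟩ : ∃ F, E = F + 1 := ⟨E - 1, by omega⟩
        rw [hS1, hNB, ← Finset.sum_Ico_succ_top (by omega : 1 ≤ F + 1), hBs,
          Finset.range_eq_Ico]
        exact Finset.sum_le_sum_of_subset (fun x hx => by simp only [mem_Ico, mem_range] at hx ⊢; omega)
    have hNB_le : NB ≤ Bs := by
      rw [hNB, hBs]
      exact Finset.single_le_sum (f := fun u => N u * ∑ j ∈ range q,
        hcard q m ((e:ℤ) - q * (u:ℤ) - j)) (fun i _ => Nat.zero_le _) (self_mem_range_succ E)
    have hV : t * NB ≤ (q * q ^ m) * Ch := by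
      have h1 : t * N E ≤ Ch := by
        rw [hCh, hst]
        have := Finset.card_nsmul_le_sum (Ico (E+1) (E+1+t)) N (N E) (fun x hx => by
          simp only [mem_Ico] at hx
          exact hN E x (by omega) (by omega))
        rwa [Nat.card_Ico, Nat.add_sub_cancel_left, smul_eq_mul] at this
      calc t * NB = (t * N E) * (∑ j ∈ range q, hcard q m ((e:ℤ) - q * (E:ℤ) - j)) := by
            rw [hNB]; ring
        _ ≤ Ch * (q * q ^ m) := Nat.mul_le_mul h1 (Bv_le q m e (E:ℤ))
        _ = (q * q ^ m) * Ch := by ring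
    have hstt : s * NB ≤ (E+1) * NB + (E+1) * (t * NB) := by
      have : s ≤ (E+1) + (E+1) * t := by
        have := Nat.le_mul_of_pos_left t (by omega : 0 < E + 1)
        omega
      calc s * NB ≤ ((E+1) + (E+1) * t) * NB := Nat.mul_le_mul_right _ this
        _ = (E+1) * NB + (E+1) * (t * NB) := by ring
    calc s * (q * A) ≤ s * (S1 + 2 * NB) := Nat.mul_le_mul_left _ hg
      _ = s * (S1 + NB) + s * NB := by ring
      _ ≤ s * Bs + ((E+1) * NB + (E+1) * (t * NB)) :=
          Nat.add_le_add (Nat.mul_le_mul_left _ hU) hstt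
      _ ≤ s * Bs + ((E+1) * Bs + (E+1) * ((q * q ^ m) * Ch)) :=
          Nat.add_le_add_left (Nat.add_le_add (Nat.mul_le_mul_left _ hNB_le)
            (Nat.mul_le_mul_left _ hV)) _
      _ = (s + (E+1)) * Bs + ((E+1) * (q * q ^ m)) * Ch := by ring
  calc s * (q * (A + Ch * q ^ m)) = s * (q * A) + s * q * q ^ m * Ch := by ring
    _ ≤ ((s + (E+1)) * Bs + ((E+1) * (q * q ^ m)) * Ch) + s * q * q ^ m * Ch :=
        Nat.add_le_add_right core _
    _ = (s + (E+1)) * (Bs + Ch * (q * q ^ m)) := by ring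


def hPf' (q m : ℕ) : Finset (Fin m → ℕ) := Fintype.piFinset fun _ => Finset.range q

def TsetF (s m : ℕ) : Finset (Fin m → ℕ) :=
  (Fintype.piFinset fun _ => Finset.range s).filter fun t => (∑ ℓ, t ℓ) < s

def NCard (s m u : ℕ) : ℕ :=
  ((TsetF s m ×ˢ Finset.range s).filter fun p => (∑ ℓ, p.1 ℓ) + p.2 = u).card

lemma sum_Cset (q s m : ℕ) (hq : 0 < q) {M : Type*} [AddCommMonoid M]
    (f : (Fin m → ℕ) → M) :
    ∑ k ∈ Cset q s m, f k
      = ∑ p ∈ hPf' q m ×ˢ TsetF s m, f (fun ℓ => p.1 ℓ + q * p.2 ℓ) := by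
  apply Finset.sum_nbij' (i := fun k => ((fun ℓ => k ℓ % q, fun ℓ => k ℓ / q) :
      (Fin m → ℕ) × (Fin m → ℕ))) (j := fun p => fun ℓ => p.1 ℓ + q * p.2 ℓ)
  · intro k hk
    simp only [Cset, Finset.mem_filter, Fintype.mem_piFinset, Finset.mem_range] at hk
    simp only [Finset.mem_product, hPf', TsetF, Finset.mem_filter, Fintype.mem_piFinset,
      Finset.mem_range]
    refine ⟨fun ℓ => Nat.mod_lt _ hq, ⟨fun ℓ => ?_, hk.2⟩⟩
    exact lt_of_le_of_lt
      (Finset.single_le_sum (f := fun ℓ => k ℓ / q) (fun i _ => Nat.zero_le _)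
        (Finset.mem_univ ℓ)) hk.2
  · intro p hp
    simp only [Finset.mem_product, hPf', TsetF, Finset.mem_filter, Fintype.mem_piFinset,
      Finset.mem_range] at hp
    obtain ⟨hp1, hp2, hp3⟩ := hp
    have hdiv : ∀ ℓ, (p.1 ℓ + q * p.2 ℓ) / q = p.2 ℓ := by
      intro ℓ
      rw [Nat.add_mul_div_left _ _ hq, Nat.div_eq_of_lt (hp1 ℓ), Nat.zero_add]
    simp only [Cset, Finset.mem_filter, Fintype.mem_piFinset, Finset.mem_range]
    constructor
    · intro ℓ
      have h1 : p.1 ℓ + q * p.2 ℓ < q * (p.2 ℓ + 1) := by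
        have := hp1 ℓ
        linarith [Nat.mul_succ q (p.2 ℓ)]
      have h2 : q * (p.2 ℓ + 1) ≤ q * s := Nat.mul_le_mul_left q (by
        have h3 : p.2 ℓ ≤ ∑ ℓ', p.2 ℓ' :=
          Finset.single_le_sum (f := fun ℓ' => p.2 ℓ') (fun i _ => Nat.zero_le _)
            (Finset.mem_univ ℓ)
        omega)
      calc p.1 ℓ + q * p.2 ℓ < q * (p.2 ℓ + 1) := h1
        _ ≤ q * s := h2
        _ = s * q := Nat.mul_comm q s
    · calc (∑ ℓ, (p.1 ℓ + q * p.2 ℓ) / q) = ∑ ℓ, p.2 ℓ :=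
          Finset.sum_congr rfl (fun ℓ _ => hdiv ℓ)
        _ < s := hp3
  · intro k _
    funext ℓ
    exact Nat.mod_add_div (k ℓ) q
  · intro p hp
    simp only [Finset.mem_product, hPf', TsetF, Finset.mem_filter, Fintype.mem_piFinset,
      Finset.mem_range] at hp
    obtain ⟨hp1, hp2, hp3⟩ := hp
    refine Prod.ext ?_ ?_
    · funext ℓ
      simp only []
      rw [Nat.add_mul_mod_self_left, Nat.mod_eq_of_lt (hp1 ℓ)]
    · funext ℓ
      simp only []
      rw [Nat.add_mul_div_left _ _ hq, Nat.div_eq_of_lt (hp1 ℓ), Nat.zero_add]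
  · intro k _
    apply congrArg f
    funext ℓ
    exact (Nat.mod_add_div (k ℓ) q).symm

lemma Delta_eq (q : ℕ) (hq : 0 < q) (d' : ℤ) (s' : ℕ) (h : d' + 1 ≤ q * s') :
    Δfun q d' (s' : ℤ)
      = q * (((Finset.range s').filter fun c : ℕ => d' + 1 < q * ((c:ℤ) + 1)).card : ℤ) := by
  have hq' : (0:ℤ) < (q:ℤ) := by exact_mod_cast hq
  have hfd : (d' + 1).fdiv q = (d' + 1) / q := Int.fdiv_eq_ediv_of_nonneg _ (le_of_lt hq')
  have hLs : (d' + 1) / q ≤ (s' : ℤ) := by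
    calc (d' + 1) / q ≤ ((q : ℤ) * s') / q := Int.ediv_le_ediv hq' h
      _ = (s' : ℤ) := Int.mul_ediv_cancel_left _ (ne_of_gt hq')
  have hcond : ∀ c : ℕ, (d' + 1 < q * ((c:ℤ) + 1)) ↔ ((d' + 1) / q ≤ (c:ℤ)) := by
    intro c
    rw [← Int.lt_add_one_iff, Int.ediv_lt_iff_lt_mul hq', mul_comm]
  have hfilter : (Finset.range s').filter (fun c : ℕ => d' + 1 < q * ((c:ℤ) + 1))
      = Finset.Ico ((d' + 1) / q).toNat s' := by
    ext c
    simp only [Finset.mem_filter, Finset.mem_range, Finset.mem_Ico, hcond c]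
    omega
  rw [hfilter, Nat.card_Ico, Δfun, hfd]
  have h1 : ((d' + 1) / q).toNat ≤ s' := by omega
  rw [Nat.cast_sub h1]
  rw [Int.toNat_eq_max]
  ring

lemma card_filter_product {α β : Type*} [DecidableEq α] [DecidableEq β]
    (A : Finset α) (B : Finset β) (P : α × β → Prop) [DecidablePred P] :
    ((A ×ˢ B).filter P).card = ∑ a ∈ A, (B.filter fun b => P (a, b)).card := by
  rw [← Finset.card_sigma]
  apply Finset.card_bij' (fun p _ => (⟨p.1, p.2⟩ : Σ _ : α, β)) (fun p _ => (p.1, p.2))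
  · intro p hp
    simp only [Finset.mem_filter, Finset.mem_product] at hp
    simp only [Finset.mem_sigma, Finset.mem_filter]
    exact ⟨hp.1.1, hp.1.2, hp.2⟩
  · intro p hp
    simp only [Finset.mem_sigma, Finset.mem_filter] at hp
    simp only [Finset.mem_filter, Finset.mem_product]
    exact ⟨⟨hp.1, hp.2.1⟩, hp.2.2⟩
  · intro p _; rfl
  · intro p _; rfl

lemma regroup (s m : ℕ) (G : ℕ → ℕ) (hG : ∀ u, s ≤ u → G u = 0) :
    ∑ t ∈ TsetF s m, ∑ c ∈ Finset.range s, G ((∑ ℓ, t ℓ) + c)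
      = ∑ u ∈ Finset.range s, (NCard s m u) * G u := by
  classical
  rw [← Finset.sum_product']
  set X := TsetF s m ×ˢ Finset.range s with hX
  set f : (Fin m → ℕ) × ℕ → ℕ := fun p => (∑ ℓ, p.1 ℓ) + p.2 with hf
  rw [← Finset.sum_filter_add_sum_filter_not X (fun p => f p < s) (fun p => G (f p))]
  have h2 : ∑ p ∈ X.filter (fun p => ¬ f p < s), G (f p) = 0 := by
    apply Finset.sum_eq_zero
    intro p hp
    simp only [Finset.mem_filter, not_lt] at hp
    exact hG _ hp.2
  rw [h2, Nat.add_zero]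
  rw [← Finset.sum_fiberwise_of_maps_to (g := f) (t := Finset.range s) ?_ (fun p => G (f p))]
  · apply Finset.sum_congr rfl
    intro u hu
    simp only [Finset.mem_range] at hu
    have hff : (X.filter (fun p => f p < s)).filter (fun p => f p = u)
        = X.filter (fun p => f p = u) := by
      rw [Finset.filter_filter]
      apply Finset.filter_congr
      intro p _
      constructor
      · exact fun h => h.2
      · exact fun h => ⟨by omega, h⟩
    rw [hff]
    have : ∀ p ∈ X.filter (fun p => f p = u), G (f p) = G u := by
      intro p hp
      simp only [Finset.mem_filter] at hp
      rw [hp.2]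
    rw [Finset.sum_congr rfl this, Finset.sum_const, smul_eq_mul, NCard]
  · intro p hp
    simp only [Finset.mem_filter, Finset.mem_range] at hp ⊢
    exact hp.2

lemma Rset_card (q : ℕ) (d : ℤ) (s m : ℕ) (hq : 0 < q) :
    (Rset q d s (m+1)).card
      = ∑ k ∈ Cset q s m, (((Finset.range s) ×ˢ (Finset.range q)).filter fun cr =>
          (∑ ℓ, k ℓ / q) + cr.1 < s ∧ d < (∑ ℓ, (k ℓ:ℤ)) + q * cr.1 + cr.2).card := by
  rw [← Finset.card_sigma]
  refine Finset.card_bij'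
    (fun v _ => (⟨Fin.init v, (v (Fin.last m) / q, v (Fin.last m) % q)⟩ :
      Σ _ : Fin m → ℕ, ℕ × ℕ))
    (fun p _ => Fin.snoc p.1 (q * p.2.1 + p.2.2)) ?hi ?hj ?li ?ri
  case hi =>
    intro v hv
    simp only [Rset, Cset, Finset.mem_filter, Fintype.mem_piFinset, Finset.mem_range] at hv
    obtain ⟨⟨hcoords, hsum⟩, hd⟩ := hv
    have hsplit1 : (∑ ℓ : Fin (m+1), v ℓ / q)
        = (∑ ℓ : Fin m, v (Fin.castSucc ℓ) / q) + v (Fin.last m) / q :=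
      Fin.sum_univ_castSucc (f := fun ℓ => v ℓ / q)
    have hsplit2 : (∑ ℓ : Fin (m+1), (v ℓ : ℤ))
        = (∑ ℓ : Fin m, (v (Fin.castSucc ℓ) : ℤ)) + (v (Fin.last m) : ℤ) :=
      Fin.sum_univ_castSucc (f := fun ℓ => (v ℓ : ℤ))
    simp only [Finset.mem_sigma, Cset, Finset.mem_filter, Fintype.mem_piFinset,
      Finset.mem_range, Finset.mem_product]
    have hinit : ∀ ℓ : Fin m, Fin.init v ℓ = v (Fin.castSucc ℓ) := fun ℓ => rfl
    refine ⟨⟨fun ℓ => ?_, ?_⟩, ⟨?_, ?_⟩, ?_, ?_⟩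
    · rw [hinit ℓ]; exact hcoords _
    · calc (∑ ℓ : Fin m, Fin.init v ℓ / q) = ∑ ℓ : Fin m, v (Fin.castSucc ℓ) / q :=
          Finset.sum_congr rfl (fun ℓ _ => by rw [hinit ℓ])
        _ ≤ ∑ ℓ : Fin (m+1), v ℓ / q := by rw [hsplit1]; exact Nat.le_add_right _ _
        _ < s := hsum
    · -- c < s
      calc v (Fin.last m) / q ≤ ∑ ℓ : Fin (m+1), v ℓ / q := by
            rw [hsplit1]; exact Nat.le_add_left _ _
        _ < s := hsum
    · exact Nat.mod_lt _ hq
    · -- sum condition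
      calc (∑ ℓ : Fin m, Fin.init v ℓ / q) + v (Fin.last m) / q
          = ∑ ℓ : Fin (m+1), v ℓ / q := by
            rw [hsplit1]
            congr 1
        _ < s := hsum
    · -- d condition
      have hx : (q : ℤ) * (v (Fin.last m) / q : ℕ) + ((v (Fin.last m) % q : ℕ) : ℤ)
          = (v (Fin.last m) : ℤ) := by
        exact_mod_cast congrArg (Nat.cast : ℕ → ℤ) (Nat.div_add_mod (v (Fin.last m)) q)
      calc d < ∑ ℓ : Fin (m+1), (v ℓ : ℤ) := hd
        _ = (∑ ℓ : Fin m, (Fin.init v ℓ : ℤ)) + ((q:ℤ) * (v (Fin.last m) / q : ℕ)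
              + ((v (Fin.last m) % q : ℕ) : ℤ)) := by
            rw [hsplit2, hx]
            rfl
        _ = (∑ ℓ : Fin m, (Fin.init v ℓ : ℤ)) + (q:ℤ) * (v (Fin.last m) / q : ℕ)
              + ((v (Fin.last m) % q : ℕ) : ℤ) := by ring
  case hj =>
    intro p hp
    simp only [Finset.mem_sigma, Cset, Finset.mem_filter, Fintype.mem_piFinset,
      Finset.mem_range, Finset.mem_product] at hp
    obtain ⟨⟨hcoords, hsum⟩, ⟨hc, hr⟩, hcond, hd⟩ := hp
    simp only [Rset, Cset, Finset.mem_filter, Fintype.mem_piFinset, Finset.mem_range]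
    set x := q * p.2.1 + p.2.2 with hxdef
    have hxdiv : x / q = p.2.1 := by
      rw [hxdef, Nat.mul_add_div hq, Nat.div_eq_of_lt hr, Nat.add_zero]
    have hxmod : x % q = p.2.2 := by
      rw [hxdef, Nat.mul_add_mod, Nat.mod_eq_of_lt hr]
    have hxlt : x < s * q := by
      have h1 : x < q * (p.2.1 + 1) := by
        rw [Nat.mul_succ]
        omega
      have h2 : q * (p.2.1 + 1) ≤ q * s := Nat.mul_le_mul_left q (by omega)
      calc x < q * (p.2.1 + 1) := h1
        _ ≤ q * s := h2
        _ = s * q := Nat.mul_comm q s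
    set y : Fin (m+1) → ℕ := Fin.snoc p.1 x with hy
    have hyc : ∀ ℓ : Fin m, y (Fin.castSucc ℓ) = p.1 ℓ := fun ℓ => by rw [hy]; simp
    have hyl : y (Fin.last m) = x := by rw [hy]; simp
    refine ⟨⟨fun ℓ => ?_, ?_⟩, ?_⟩
    · refine Fin.lastCases ?_ ?_ ℓ
      · rw [hyl]; exact hxlt
      · intro i; rw [hyc i]; exact hcoords i
    · calc (∑ ℓ : Fin (m+1), y ℓ / q)
          = (∑ ℓ : Fin m, y (Fin.castSucc ℓ) / q) + y (Fin.last m) / q :=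
            Fin.sum_univ_castSucc (f := fun ℓ => y ℓ / q)
        _ = (∑ ℓ : Fin m, p.1 ℓ / q) + p.2.1 := by
            rw [hyl, hxdiv]
            congr 1
            exact Finset.sum_congr rfl (fun ℓ _ => by rw [hyc ℓ])
        _ < s := hcond
    · calc d < (∑ ℓ : Fin m, (p.1 ℓ : ℤ)) + q * p.2.1 + p.2.2 := hd
        _ = (∑ ℓ : Fin m, ((y (Fin.castSucc ℓ) : ℕ) : ℤ)) + ((y (Fin.last m) : ℕ) : ℤ) := by
            rw [hyl]
            have hsc : (∑ ℓ : Fin m, ((y (Fin.castSucc ℓ) : ℕ) : ℤ))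
                = ∑ ℓ : Fin m, (p.1 ℓ : ℤ) :=
              Finset.sum_congr rfl (fun ℓ _ => by rw [hyc ℓ])
            rw [hsc, hxdef]
            push_cast
            ring
        _ = ∑ ℓ : Fin (m+1), ((y ℓ : ℕ) : ℤ) :=
            (Fin.sum_univ_castSucc (f := fun ℓ => ((y ℓ : ℕ) : ℤ))).symm
  case li =>
    intro v _
    show Fin.snoc (Fin.init v) (q * (v (Fin.last m) / q) + v (Fin.last m) % q) = v
    have h0 : q * (v (Fin.last m) / q) + v (Fin.last m) % q = v (Fin.last m) :=
      Nat.div_add_mod (v (Fin.last m)) q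
    rw [h0]
    exact Fin.snoc_init_self v
  case ri =>
    intro p hp
    obtain ⟨k, c, r⟩ := p
    simp only [Finset.mem_sigma, Finset.mem_filter, Finset.mem_product,
      Finset.mem_range] at hp
    have hr : r < q := hp.2.1.2
    show (⟨Fin.init (Fin.snoc k (q*c+r) : Fin (m+1) → ℕ),
        ((Fin.snoc k (q*c+r) : Fin (m+1) → ℕ) (Fin.last m) / q,
         (Fin.snoc k (q*c+r) : Fin (m+1) → ℕ) (Fin.last m) % q)⟩ : Σ _ : Fin m → ℕ, ℕ × ℕ)
      = ⟨k, (c, r)⟩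
    rw [Fin.snoc_last, Fin.init_snoc]
    rw [Nat.mul_add_div hq, Nat.div_eq_of_lt hr, Nat.add_zero, Nat.mul_add_mod,
      Nat.mod_eq_of_lt hr]


def Gfun (q s : ℕ) (d : ℤ) (Si : ℕ) (u : ℕ) : ℕ :=
  if u < s ∧ d + 1 - q * ((u:ℤ) + 1) < (Si:ℤ) then 1 else 0

def Gfun' (q s : ℕ) (d : ℤ) (Si : ℕ) (u : ℕ) : ℕ :=
  ((Finset.range q).filter fun r : ℕ => u < s ∧ d < (Si:ℤ) + q * (u:ℤ) + (r:ℤ)).card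

lemma perp (q s : ℕ) (hq : 0 < q) (d : ℤ) (hd : d < ((s*q : ℕ) : ℤ)) (Si St : ℕ)
    (hSt : St < s) :
    Δfun q (d - ((Si + q * St : ℕ) : ℤ)) ((s:ℤ) - ((St:ℕ):ℤ))
      = (q:ℤ) * ((∑ c ∈ Finset.range s, Gfun q s d Si (St + c) : ℕ) : ℤ) := by
  have h1 : ((s:ℤ) - St) = ((s - St : ℕ) : ℤ) := by omega
  have hbound : (d - ((Si + q * St : ℕ) : ℤ)) + 1 ≤ q * ((s - St : ℕ) : ℤ) := by
    have hc : ((s - St : ℕ) : ℤ) = (s:ℤ) - St := by omega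
    rw [hc]
    push_cast at hd ⊢
    have : (0:ℤ) ≤ Si := Int.natCast_nonneg Si
    nlinarith
  rw [h1, Delta_eq q hq _ (s - St) hbound]
  congr 1
  rw [Finset.card_filter]
  have hsub : Finset.range (s - St) ⊆ Finset.range s :=
    Finset.range_subset_range.2 (by omega)
  have hstep1 : (∑ c ∈ Finset.range (s - St),
        (if d - ((Si + q * St : ℕ) : ℤ) + 1 < q * ((c:ℤ) + 1) then 1 else 0))
      = ∑ c ∈ Finset.range (s - St), Gfun q s d Si (St + c) := by
    apply Finset.sum_congr rfl
    intro c hc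
    simp only [Finset.mem_range] at hc
    have hcs : St + c < s := by omega
    have hiff : (d - ((Si + q * St : ℕ) : ℤ) + 1 < q * ((c:ℤ) + 1))
        ↔ (St + c < s ∧ d + 1 - q * (((St + c : ℕ):ℤ) + 1) < (Si:ℤ)) := by
      constructor
      · intro h
        refine ⟨hcs, ?_⟩
        push_cast at h ⊢
        linarith
      · intro h
        have h2 := h.2
        push_cast at h2 ⊢
        linarith
    rw [Gfun]
    exact if_congr hiff rfl rfl
  rw [hstep1]
  refine congrArg (fun n : ℕ => (n : ℤ)) (Finset.sum_subset hsub ?_)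
  intro c hc hnc
  simp only [Finset.mem_range] at hc hnc
  rw [Gfun, if_neg (fun hcon => absurd hcon.1 (by omega))]

lemma NCard_mono (s m : ℕ) (u v : ℕ) (huv : u ≤ v) (hv : v < s) :
    NCard s m u ≤ NCard s m v := by
  apply Finset.card_le_card_of_injOn (fun p => (p.1, p.2 + (v - u)))
  · intro p hp
    simp only [NCard, Finset.mem_coe, Finset.mem_filter, Finset.mem_product] at hp ⊢
    refine ⟨⟨hp.1.1, ?_⟩, by omega⟩
    simp only [Finset.mem_range] at hp ⊢
    omega
  · intro p1 h1 p2 h2 heq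
    simp only [Prod.mk.injEq] at heq
    have : p1.2 = p2.2 := by omega
    exact Prod.ext heq.1 this

lemma cast_sum_eq (m : ℕ) (f : Fin m → ℕ) : (∑ ℓ, ((f ℓ : ℕ) : ℤ)) = ((∑ ℓ, f ℓ : ℕ) : ℤ) := by
  push_cast
  rfl

lemma LHS_eq (q s m : ℕ) (hq : 0 < q) (hs : 0 < s) (d : ℤ) (hd : d < ((s*q : ℕ):ℤ)) :
    (∑ k ∈ Cset q s m, Δfun q (d - ∑ ℓ, (k ℓ : ℤ)) ((s : ℤ) - ((∑ ℓ, k ℓ / q : ℕ) : ℤ)))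
      = ((q * ∑ u ∈ Finset.range s, NCard s m u * hcard q m (d + 1 - q * ((u:ℤ) + 1)) : ℕ) : ℤ) := by
  rw [sum_Cset q s m hq]
  have hper : ∀ p ∈ hPf' q m ×ˢ TsetF s m,
      Δfun q (d - ∑ ℓ, ((p.1 ℓ + q * p.2 ℓ : ℕ) : ℤ))
        ((s : ℤ) - ((∑ ℓ, (p.1 ℓ + q * p.2 ℓ) / q : ℕ) : ℤ))
      = (q:ℤ) * ((∑ c ∈ Finset.range s,
          Gfun q s d (∑ ℓ, p.1 ℓ) ((∑ ℓ, p.2 ℓ) + c) : ℕ) : ℤ) := by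
    intro p hp
    simp only [Finset.mem_product, hPf', TsetF, Finset.mem_filter, Fintype.mem_piFinset,
      Finset.mem_range] at hp
    obtain ⟨hi, _, ht⟩ := hp
    have hdivℓ : ∀ ℓ, (p.1 ℓ + q * p.2 ℓ) / q = p.2 ℓ := fun ℓ => by
      rw [Nat.add_mul_div_left _ _ hq, Nat.div_eq_of_lt (hi ℓ), Nat.zero_add]
    have e1 : (∑ ℓ, ((p.1 ℓ + q * p.2 ℓ : ℕ) : ℤ))
        = (((∑ ℓ, p.1 ℓ) + q * ∑ ℓ, p.2 ℓ : ℕ) : ℤ) := by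
      push_cast
      rw [Finset.sum_add_distrib, Finset.mul_sum]
    have e2 : (((∑ ℓ, (p.1 ℓ + q * p.2 ℓ) / q : ℕ)) : ℤ) = ((∑ ℓ, p.2 ℓ : ℕ) : ℤ) := by
      exact_mod_cast congrArg (fun n : ℕ => (n:ℤ))
        (Finset.sum_congr rfl (fun ℓ _ => hdivℓ ℓ))
    rw [e1, e2]
    exact perp q s hq d hd (∑ ℓ, p.1 ℓ) (∑ ℓ, p.2 ℓ) ht
  rw [Finset.sum_congr rfl hper, ← Finset.mul_sum, ← Nat.cast_sum]
  have hXY : (∑ p ∈ hPf' q m ×ˢ TsetF s m, ∑ c ∈ Finset.range s,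
        Gfun q s d (∑ ℓ, p.1 ℓ) ((∑ ℓ, p.2 ℓ) + c))
      = ∑ u ∈ Finset.range s, NCard s m u * hcard q m (d + 1 - q * ((u:ℤ) + 1)) := by
    rw [Finset.sum_product]
    have hreg : ∀ i ∈ hPf' q m, (∑ t ∈ TsetF s m, ∑ c ∈ Finset.range s,
          Gfun q s d (∑ ℓ, i ℓ) ((∑ ℓ, t ℓ) + c))
        = ∑ u ∈ Finset.range s, NCard s m u * Gfun q s d (∑ ℓ, i ℓ) u := by
      intro i _
      exact regroup s m _ (fun u hu => by rw [Gfun, if_neg (fun hcon => absurd hcon.1 (by omega))])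
    rw [Finset.sum_congr rfl hreg, Finset.sum_comm]
    apply Finset.sum_congr rfl
    intro u hu
    simp only [Finset.mem_range] at hu
    rw [← Finset.mul_sum]
    congr 1
    calc (∑ i ∈ hPf' q m, Gfun q s d (∑ ℓ, i ℓ) u)
        = ∑ i ∈ hPf' q m, (if d + 1 - q * ((u:ℤ) + 1) < ((∑ ℓ, i ℓ : ℕ) : ℤ) then 1 else 0) := by
          apply Finset.sum_congr rfl
          intro i _
          rw [Gfun]
          exact if_congr (and_iff_right hu) rfl rfl
      _ = ((hPf' q m).filter fun i => d + 1 - q * ((u:ℤ) + 1) < ((∑ ℓ, i ℓ : ℕ) : ℤ)).card :=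
          (Finset.card_filter _ _).symm
      _ = hcard q m (d + 1 - q * ((u:ℤ) + 1)) := by
          rw [hcard]
          apply congrArg Finset.card
          apply Finset.filter_congr
          intro i _
          rw [cast_sum_eq]
  rw [hXY]
  push_cast
  ring

lemma RHS_eq (q s m : ℕ) (hq : 0 < q) (d : ℤ) :
    ((Rset q d s (m+1)).card : ℕ)
      = ∑ u ∈ Finset.range s, NCard s m u
          * ∑ j ∈ Finset.range q, hcard q m (d - q * (u:ℤ) - j) := by
  rw [Rset_card q d s m hq, sum_Cset q s m hq]
  have hper : ∀ p ∈ hPf' q m ×ˢ TsetF s m,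
      (((Finset.range s) ×ˢ (Finset.range q)).filter fun cr =>
          (∑ ℓ, (p.1 ℓ + q * p.2 ℓ) / q) + cr.1 < s
            ∧ d < (∑ ℓ, ((p.1 ℓ + q * p.2 ℓ : ℕ):ℤ)) + q * cr.1 + cr.2).card
      = ∑ c ∈ Finset.range s, Gfun' q s d (∑ ℓ, p.1 ℓ) ((∑ ℓ, p.2 ℓ) + c) := by
    intro p hp
    simp only [Finset.mem_product, hPf', TsetF, Finset.mem_filter, Fintype.mem_piFinset,
      Finset.mem_range] at hp
    obtain ⟨hi, _, ht⟩ := hp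
    have hdivℓ : ∀ ℓ, (p.1 ℓ + q * p.2 ℓ) / q = p.2 ℓ := fun ℓ => by
      rw [Nat.add_mul_div_left _ _ hq, Nat.div_eq_of_lt (hi ℓ), Nat.zero_add]
    have e2n : (∑ ℓ, (p.1 ℓ + q * p.2 ℓ) / q) = ∑ ℓ, p.2 ℓ :=
      Finset.sum_congr rfl (fun ℓ _ => hdivℓ ℓ)
    have e1 : (∑ ℓ, ((p.1 ℓ + q * p.2 ℓ : ℕ) : ℤ))
        = ((∑ ℓ, p.1 ℓ : ℕ) : ℤ) + q * ((∑ ℓ, p.2 ℓ : ℕ) : ℤ) := by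
      push_cast
      rw [Finset.sum_add_distrib, Finset.mul_sum]
    rw [card_filter_product]
    apply Finset.sum_congr rfl
    intro c hc
    simp only [Finset.mem_range] at hc
    rw [Gfun']
    apply congrArg Finset.card
    apply Finset.filter_congr
    intro r _
    rw [e2n, e1]
    constructor
    · rintro ⟨h1, h2⟩
      refine ⟨h1, ?_⟩
      push_cast at h2 ⊢
      linarith
    · rintro ⟨h1, h2⟩
      refine ⟨h1, ?_⟩
      push_cast at h2 ⊢
      linarith
  rw [Finset.sum_congr rfl hper, Finset.sum_product]
  have hreg : ∀ i ∈ hPf' q m, (∑ t ∈ TsetF s m, ∑ c ∈ Finset.range s,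
        Gfun' q s d (∑ ℓ, i ℓ) ((∑ ℓ, t ℓ) + c))
      = ∑ u ∈ Finset.range s, NCard s m u * Gfun' q s d (∑ ℓ, i ℓ) u := by
    intro i _
    apply regroup s m
    intro u hu
    rw [Gfun']
    apply Finset.card_eq_zero.2
    apply Finset.filter_false_of_mem
    intro r _
    intro hcon
    omega
  rw [Finset.sum_congr rfl hreg, Finset.sum_comm]
  apply Finset.sum_congr rfl
  intro u hu
  simp only [Finset.mem_range] at hu
  rw [← Finset.mul_sum]
  congr 1
  calc (∑ i ∈ hPf' q m, Gfun' q s d (∑ ℓ, i ℓ) u)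
      = ∑ i ∈ hPf' q m, ∑ r ∈ Finset.range q,
          (if d - q * (u:ℤ) - (r:ℤ) < ((∑ ℓ, i ℓ : ℕ) : ℤ) then 1 else 0) := by
        apply Finset.sum_congr rfl
        intro i _
        rw [Gfun', Finset.card_filter]
        apply Finset.sum_congr rfl
        intro r _
        refine if_congr ?_ rfl rfl
        constructor
        · rintro ⟨-, h2⟩
          linarith
        · intro h2
          exact ⟨hu, by linarith⟩
    _ = ∑ r ∈ Finset.range q, ∑ i ∈ hPf' q m,
          (if d - q * (u:ℤ) - (r:ℤ) < ((∑ ℓ, i ℓ : ℕ) : ℤ) then 1 else 0) := Finset.sum_comm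
    _ = ∑ j ∈ Finset.range q, hcard q m (d - q * (u:ℤ) - (j:ℤ)) := by
        apply Finset.sum_congr rfl
        intro r _
        rw [hcard, Finset.card_filter]
        apply Finset.sum_congr rfl
        intro i _
        refine if_congr ?_ rfl rfl
        rw [cast_sum_eq]


theorem stmt15 (q : ℕ) (hq : IsPrimePow q) (n : ℕ) (hn : 2 ≤ n)
    (d : ℤ) (s : ℕ) (hs : 0 < s) (hd : d < (s * q : ℕ)) :
    ((∑ k ∈ Cset q s (n - 1),
        Δfun q (d - ∑ ℓ, (k ℓ : ℤ)) ((s : ℤ) - ∑ ℓ, (k ℓ / q : ℕ)) : ℤ) : ℚ)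
      ≤ (1 + ((max (d.fdiv (q : ℤ) + 1) 0 : ℤ) : ℚ) / (s : ℚ)) * (Rset q d s n).card := by
  have hq0 : 0 < q := by have := hq.two_le; omega
  obtain ⟨m, rfl⟩ : ∃ m, n = m + 1 := ⟨n - 1, by omega⟩
  have hm : 1 ≤ m := by omega
  have hmn : m + 1 - 1 = m := by omega
  rw [hmn]
  have hq' : (0:ℤ) < (q:ℤ) := by exact_mod_cast hq0
  rcases lt_or_ge d 0 with hneg | hpos
  · -- d < 0 : equality case
    rw [LHS_eq q s m hq0 hs d hd, RHS_eq q s m hq0 d]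
    have hmax : max (d.fdiv (q:ℤ) + 1) 0 = 0 := by
      rw [Int.fdiv_eq_ediv_of_nonneg _ (le_of_lt hq')]
      have := Int.ediv_neg_of_neg_of_pos hneg hq'
      omega
    rw [hmax]
    have hSR : q * (∑ u ∈ Finset.range s, NCard s m u
          * hcard q m (d + 1 - q * ((u:ℤ) + 1)))
        = ∑ u ∈ Finset.range s, NCard s m u
            * ∑ j ∈ Finset.range q, hcard q m (d - q * (u:ℤ) - j) := by
      rw [Finset.mul_sum]
      apply Finset.sum_congr rfl
      intro u hu
      have h1 : hcard q m (d + 1 - q * ((u:ℤ) + 1)) = q ^ m := by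
        apply hcard_neg
        have hu0 : (0:ℤ) ≤ (u:ℤ) := Int.natCast_nonneg u
        nlinarith
      have h2 : ∀ j ∈ Finset.range q, hcard q m (d - q * (u:ℤ) - (j:ℤ)) = q ^ m := by
        intro j _
        apply hcard_neg
        have hu0 : (0:ℤ) ≤ (u:ℤ) := Int.natCast_nonneg u
        have hj0 : (0:ℤ) ≤ (j:ℤ) := Int.natCast_nonneg j
        nlinarith
      rw [h1, Finset.sum_congr rfl h2, Finset.sum_const, Finset.card_range, smul_eq_mul]
      ring
    rw [hSR]
    simp
  · -- d ≥ 0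
    obtain ⟨e, rfl⟩ : ∃ e : ℕ, d = (e:ℤ) := ⟨d.toNat, (Int.toNat_of_nonneg hpos).symm⟩
    rw [LHS_eq q s m hq0 hs _ hd, RHS_eq q s m hq0 _]
    have hesq : e < s * q := by exact_mod_cast hd
    have hmax : max (((e:ℤ)).fdiv (q:ℤ) + 1) 0 = ((e / q + 1 : ℕ) : ℤ) := by
      rw [Int.fdiv_eq_ediv_of_nonneg _ (le_of_lt hq'), ← Int.natCast_div]
      have : (0:ℤ) ≤ ((e/q : ℕ) : ℤ) := Int.natCast_nonneg _
      push_cast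
      omega
    rw [hmax]
    have hmain := main_ineq q m s e hq0 hm hs hesq (NCard s m)
      (fun u v huv hv => NCard_mono s m u v huv hv)
    set S := ∑ u ∈ Finset.range s, NCard s m u * hcard q m ((e:ℤ) + 1 - q * ((u:ℤ) + 1))
      with hSdef
    set R := ∑ u ∈ Finset.range s, NCard s m u
        * ∑ j ∈ Finset.range q, hcard q m ((e:ℤ) - q * (u:ℤ) - j) with hRdef
    have h1 : (1 + (((e / q + 1 : ℕ) : ℤ) : ℚ) / (s : ℚ))
        = ((s + (e/q + 1) : ℕ) : ℚ) / (s : ℚ) := by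
      push_cast
      field_simp
      rw [← Int.natCast_div]
      norm_cast
    rw [h1, div_mul_eq_mul_div, le_div_iff₀ (by positivity : (0:ℚ) < (s:ℚ))]
    have hfin : (q * S) * s ≤ (s + (e/q + 1)) * R := by
      calc (q * S) * s = s * (q * S) := Nat.mul_comm _ _
        _ ≤ (s + (e/q + 1)) * R := hmain
    calc ((((q * S : ℕ) : ℤ)) : ℚ) * (s : ℚ) = (((q * S * s : ℕ)) : ℚ) := by push_cast; ring
      _ ≤ ((((s + (e/q + 1)) * R : ℕ)) : ℚ) := Nat.cast_le.mpr hfin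
      _ = ((s + (e/q + 1) : ℕ) : ℚ) * (R : ℚ) := by push_cast; ring

end Aux
end

section
/- For n ≥ 2 and integers d, s with d < sq and s > 0, the set R_{d,s,n} = C_{s,n} \ I_{d,n} decomposes as the disjoint union over i_1 ∈ C_{s,1} = [sq] of the sets {(i_1, \vec{j}) : \vec{j} ∈ R_{d - i_1, s - floor(i_1/q), n-1}}; consequently |R_{d,s,n}| = Σ_{i_1=0}^{sq-1} |R_{d-i_1, s-floor(i_1/q), n-1}|. -/
open MvPolynomial

lemma mem_Rset' {q : ℕ} {d : ℤ} {s m : ℕ} {v : Fin m → ℕ} :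
    v ∈ Rset q d s m ↔ (∀ ℓ, v ℓ < s * q) ∧ (∑ ℓ, v ℓ / q) < s ∧ d < ∑ ℓ, (v ℓ : ℤ) := by
  simp [Rset, Cset, Fintype.mem_piFinset, Finset.mem_filter, and_assoc]

theorem stmt16 (q : ℕ) (hq : IsPrimePow q) (n : ℕ) (hn : 1 ≤ n)
    (d : ℤ) (s : ℕ) (hs : 0 < s) (hd : d < (s * q : ℕ)) :
    (∀ v : Fin (n + 1) → ℕ, v ∈ Rset q d s (n + 1) ↔
        v 0 < s * q ∧ (fun ℓ : Fin n => v ℓ.succ) ∈ Rset q (d - v 0) (s - v 0 / q) n)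
    ∧ (Rset q d s (n + 1)).card
        = ∑ i ∈ Finset.range (s * q), (Rset q (d - i) (s - i / q) n).card := by
  have hq0 : 0 < q := hq.one_lt.trans_le (le_refl q) |>.le.trans_lt' one_pos
  have key : ∀ v : Fin (n + 1) → ℕ, v ∈ Rset q d s (n + 1) ↔
      v 0 < s * q ∧ (fun ℓ : Fin n => v ℓ.succ) ∈ Rset q (d - v 0) (s - v 0 / q) n := by
    intro v
    constructor
    · intro hv
      obtain ⟨hb, hsum, hd'⟩ := mem_Rset'.mp hv
      rw [Fin.sum_univ_succ] at hsum hd'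
      have hS : (∑ ℓ : Fin n, v ℓ.succ / q) < s - v 0 / q := by omega
      refine ⟨hb 0, mem_Rset'.mpr ⟨?_, hS, ?_⟩⟩
      · intro ℓ
        have h1 : v ℓ.succ / q ≤ ∑ ℓ : Fin n, v ℓ.succ / q :=
          Finset.single_le_sum (f := fun ℓ : Fin n => v ℓ.succ / q) (fun _ _ => Nat.zero_le _) (Finset.mem_univ ℓ)
        exact (Nat.div_lt_iff_lt_mul hq0).mp (h1.trans_lt hS)
      · omega
    · rintro ⟨h0, hR⟩
      obtain ⟨hb, hsum, hd'⟩ := mem_Rset'.mp hR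
      have hvq : v 0 / q < s := Nat.div_lt_of_lt_mul (by rwa [mul_comm] at h0)
      refine mem_Rset'.mpr ⟨?_, ?_, ?_⟩
      · intro ℓ
        refine Fin.cases h0 (fun ℓ => ?_) ℓ
        exact (hb ℓ).trans_le (Nat.mul_le_mul_right q (Nat.sub_le s _))
      · rw [Fin.sum_univ_succ]; omega
      · rw [Fin.sum_univ_succ]; omega
  refine ⟨key, ?_⟩
  have hset : Rset q d s (n + 1) = (Finset.range (s * q)).biUnion
      (fun i => (Rset q (d - i) (s - i / q) n).image (Fin.cons i)) := by
    ext v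
    simp only [Finset.mem_biUnion, Finset.mem_image, Finset.mem_range]
    rw [key v]
    constructor
    · rintro ⟨h0, hR⟩
      exact ⟨v 0, h0, fun ℓ => v ℓ.succ, hR, Fin.cons_self_tail v⟩
    · rintro ⟨i, hi, w, hw, rfl⟩
      simpa [Fin.cons_zero, Fin.cons_succ] using ⟨hi, hw⟩
  rw [hset, Finset.card_biUnion]
  · refine Finset.sum_congr rfl fun i _ => ?_
    exact Finset.card_image_of_injective _ (Fin.cons_right_injective (α := fun _ : Fin (n+1) => ℕ) i)
  · intro i hi j hj hij
    rw [Function.onFun, Finset.disjoint_left]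
    rintro v hvi hvj
    obtain ⟨w, _, rfl⟩ := Finset.mem_image.mp hvi
    obtain ⟨w', _, h⟩ := Finset.mem_image.mp hvj
    have h0 := congrFun h 0
    simp only [Fin.cons_zero] at h0
    exact hij h0.symm
end

section
/- For d, s ∈ N with d < sq, and any \vec{k} ∈ C_{s,n-1}, the quantity Δ_{d-|\vec{k}|, s-|\vec{k} div q|} = (s-|\vec{k} div q|)q - max(floor((d-|\vec{k}|+1)/q), 0)·q satisfies Δ_{d-|\vec{k}|, s-|\vec{k} div q|} ≤ sq - max(d + 1 - n(q-1), 0). -/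
open MvPolynomial

theorem stmt17 (q : ℕ) (hq : IsPrimePow q) (n : ℕ) (hn : 2 ≤ n)
    (d s : ℕ) (hd : d < s * q)
    (k : Fin (n - 1) → ℕ) (hk : k ∈ Cset q s (n - 1)) :
    Δfun q ((d : ℤ) - ∑ ℓ, (k ℓ : ℤ)) ((s : ℤ) - ∑ ℓ, (k ℓ / q : ℕ))
      ≤ (s * q : ℕ) - max ((d : ℤ) + 1 - n * ((q : ℤ) - 1)) 0 := by
  have hq1 : 1 ≤ q := hq.one_lt.le
  have hq0 : (0:ℤ) < (q:ℤ) := by exact_mod_cast hq.pos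
  unfold Δfun
  set K : ℤ := ∑ ℓ, (k ℓ : ℤ) with hK
  set T : ℕ := ∑ ℓ, k ℓ / q with hT
  have hKnn : 0 ≤ K := Finset.sum_nonneg fun ℓ _ => Int.ofNat_nonneg _
  have hKT : K ≤ ((n:ℤ) - 1) * ((q:ℤ) - 1) + (q:ℤ) * (T:ℤ) := by
    have hnat : (∑ ℓ, k ℓ) ≤ (n-1) * (q-1) + q * T := by
      have h1 : (∑ ℓ, k ℓ) = (∑ ℓ, k ℓ % q) + q * T := by
        rw [hT, Finset.mul_sum, ← Finset.sum_add_distrib]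
        exact Finset.sum_congr rfl fun ℓ _ => (Nat.mod_add_div _ _).symm
      have h2 : (∑ ℓ, k ℓ % q) ≤ (n-1) * (q-1) := by
        calc (∑ ℓ, k ℓ % q) ≤ ∑ _ℓ : Fin (n-1), (q-1) :=
              Finset.sum_le_sum fun ℓ _ => Nat.le_pred_of_lt (Nat.mod_lt _ hq.pos)
          _ = (n-1) * (q-1) := by simp [Finset.sum_const, Finset.card_univ]
      omega
    have hc : ((∑ ℓ, k ℓ : ℕ):ℤ) ≤ (((n-1)*(q-1)+q*T : ℕ):ℤ) := Nat.cast_le.mpr hnat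
    push_cast [Nat.cast_sub (show 1 ≤ n by omega), Nat.cast_sub hq1] at hc
    rw [hK]; exact hc
  have hKcast : (↑d - K + 1).fdiv (q:ℤ) = (↑d - K + 1) / (q:ℤ) :=
    Int.fdiv_eq_ediv_of_nonneg _ hq0.le
  rw [hKcast]
  set M : ℤ := max ((↑d - K + 1) / (q:ℤ)) 0 with hM
  have hM0 : 0 ≤ M := le_max_right _ _
  have hMq : ↑d - K + 1 < (M + 1) * (q:ℤ) := by
    rcases le_or_gt (↑d - K + 1) 0 with h | h
    · have : M = max ((↑d - K + 1) / (q:ℤ)) 0 := hM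
      nlinarith [hq0]
    · have hMe : M = (↑d - K + 1) / (q:ℤ) := max_eq_left (Int.ediv_nonneg h.le hq0.le)
      rw [hMe]
      exact Int.lt_ediv_add_one_mul_self _ hq0
  have hTnn : (0:ℤ) ≤ (T:ℤ) := Int.ofNat_nonneg _
  rcases le_or_gt ((d:ℤ) + 1 - ↑n * ((q:ℤ) - 1)) 0 with h | h
  · rw [max_eq_right h]
    push_cast
    nlinarith [hq0, hM0, hTnn]
  · rw [max_eq_left h.le]
    push_cast
    rcases le_or_gt (↑d - K + 1) 0 with h2 | h2
    · have hdiv : (↑d - K + 1) / (q:ℤ) ≤ 0 := by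
        have := Int.ediv_le_ediv hq0 h2
        simpa using this
      have hMe : M = 0 := max_eq_right hdiv
      rw [hMe]
      nlinarith [hq0, hTnn, hKT]
    · nlinarith [hq0, hTnn, hKT, hMq, hM0]
end

section
/- For d, s ∈ N with d < sq and n ≥ 1, the set R_{d,s,n} = C_{s,n} \ I_{d,n} contains all vectors \vec{j} + q\vec{t} with \vec{j} ∈ [q]^n, |\vec{j}| ≥ q, and |\vec{t}| = s-1; consequently |R_{d,s,n}| ≥ binom(n+s-2, n-1)·(q^n - binom(n+q-1, n)). -/
open MvPolynomial

lemma card_piAntidiag_univ (n k : ℕ) :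
    (Finset.piAntidiag (Finset.univ : Finset (Fin n)) k).card = (n + k - 1).choose k := by
  classical
  rw [← Finset.map_sym_eq_piAntidiag, Finset.card_map]
  have h : (Finset.univ : Finset (Fin n)).sym k = Finset.univ := by
    ext m; simp [Finset.mem_sym_iff]
  rw [h, Finset.card_univ, Sym.card_sym_eq_choose, Fintype.card_fin]

theorem stmt18 (q : ℕ) (hq : IsPrimePow q) (n : ℕ) (hn : 1 ≤ n)
    (d s : ℕ) (hs : 0 < s) (hd : d < s * q) :
    (∀ j t : Fin n → ℕ, (∀ ℓ, j ℓ < q) → q ≤ ∑ ℓ, j ℓ → (∑ ℓ, t ℓ) = s - 1 →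
        (fun ℓ => j ℓ + q * t ℓ) ∈ Rset q (d : ℤ) s n)
    ∧ (n + s - 2).choose (n - 1) * (q ^ n - (n + q - 1).choose n)
        ≤ (Rset q (d : ℤ) s n).card := by

  classical
  have hq0 : 0 < q := hq.pos
  have hqs : q * (s - 1) + q = s * q := by
    have h1 : s - 1 + 1 = s := by omega
    calc q * (s - 1) + q = q * (s - 1 + 1) := by ring
      _ = s * q := by rw [h1, Nat.mul_comm]
  have part1 : ∀ j t : Fin n → ℕ, (∀ ℓ, j ℓ < q) → q ≤ ∑ ℓ, j ℓ → (∑ ℓ, t ℓ) = s - 1 →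
      (fun ℓ => j ℓ + q * t ℓ) ∈ Rset q (d : ℤ) s n := by
    intro j t hj hjs hts
    have htl : ∀ ℓ, t ℓ ≤ s - 1 := fun ℓ =>
      hts ▸ Finset.single_le_sum (fun _ _ => Nat.zero_le _) (Finset.mem_univ ℓ)
    have hdiv : ∀ ℓ, (j ℓ + q * t ℓ) / q = t ℓ := by
      intro ℓ
      rw [Nat.add_mul_div_left _ _ hq0, Nat.div_eq_of_lt (hj ℓ), Nat.zero_add]
    have hsumlb : s * q ≤ ∑ ℓ, (j ℓ + q * t ℓ) := by
      rw [Finset.sum_add_distrib, ← Finset.mul_sum, hts]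
      omega
    unfold Rset Cset
    simp only [Finset.mem_filter, Fintype.mem_piFinset, Finset.mem_range]
    refine ⟨⟨fun ℓ => ?_, ?_⟩, ?_⟩
    · have h1 : q * t ℓ ≤ q * (s - 1) := Nat.mul_le_mul_left _ (htl ℓ)
      have := hj ℓ
      omega
    · simp only [hdiv, hts]
      omega
    · have : (s * q : ℤ) ≤ ∑ ℓ, ((j ℓ + q * t ℓ : ℕ) : ℤ) := by
        rw [← Nat.cast_sum]
        exact_mod_cast hsumlb
      have hd' : (d : ℤ) < (s * q : ℕ) := by exact_mod_cast hd
      push_cast at this hd' ⊢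
      linarith
  refine ⟨part1, ?_⟩
  -- counting
  set T : Finset (Fin n → ℕ) := Finset.piAntidiag Finset.univ (s - 1) with hT
  set J : Finset (Fin n → ℕ) :=
    (Fintype.piFinset fun _ : Fin n => Finset.range q).filter
      (fun j => q ≤ ∑ ℓ, j ℓ) with hJ
  have hTcard : T.card = (n + s - 2).choose (n - 1) := by
    rw [hT, card_piAntidiag_univ, show n + (s - 1) - 1 = n + s - 2 by omega]
    have h := Nat.choose_symm (show s - 1 ≤ n + s - 2 by omega)
    rw [show n + s - 2 - (s - 1) = n - 1 by omega] at h
    exact h.symm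
  -- bound on small-sum vectors
  have hBle : ((Fintype.piFinset fun _ : Fin n => Finset.range q).filter
      (fun j => ¬ q ≤ ∑ ℓ, j ℓ)).card ≤ (n + q - 1).choose n := by
    have hinj : ∀ v ∈ (Fintype.piFinset fun _ : Fin n => Finset.range q).filter
        (fun j => ¬ q ≤ ∑ ℓ, j ℓ),
        (Fin.snoc v (q - 1 - ∑ ℓ, v ℓ) : Fin (n + 1) → ℕ) ∈
          Finset.piAntidiag (Finset.univ : Finset (Fin (n + 1))) (q - 1) := by
      intro v hv
      simp only [Finset.mem_filter, not_le] at hv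
      rw [Finset.mem_piAntidiag]
      refine ⟨?_, fun _ _ => Finset.mem_univ _⟩
      rw [Fin.sum_univ_castSucc]
      simp only [Fin.snoc_castSucc, Fin.snoc_last]
      omega
    have hinj2 : Set.InjOn
        (fun v : Fin n → ℕ => (Fin.snoc v (q - 1 - ∑ ℓ, v ℓ) : Fin (n + 1) → ℕ))
        ((Fintype.piFinset fun _ : Fin n => Finset.range q).filter
          (fun j => ¬ q ≤ ∑ ℓ, j ℓ) : Set (Fin n → ℕ)) := by
      intro a _ b _ hab
      funext ℓ
      have := congrFun hab ℓ.castSucc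
      simpa using this
    have e1 : n + 1 + (q - 1) - 1 = n + q - 1 := by omega
    have e2 : q - 1 ≤ n + q - 1 := by omega
    have e3 : n + q - 1 - (q - 1) = n := by omega
    have hcard := Finset.card_le_card_of_injOn _ hinj hinj2
    refine hcard.trans ?_
    rw [card_piAntidiag_univ, e1]
    have h := Nat.choose_symm e2
    rw [e3] at h
    exact le_of_eq h.symm
  have hJcard : q ^ n - (n + q - 1).choose n ≤ J.card := by
    have htot := Finset.card_filter_add_card_filter_not
      (s := Fintype.piFinset fun _ : Fin n => Finset.range q)
      (p := fun j => q ≤ ∑ ℓ, j ℓ)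
    simp only [not_le] at htot
    simp only [not_le] at hBle
    have hpfcard : (Fintype.piFinset fun _ : Fin n => Finset.range q).card = q ^ n := by
      simp [Fintype.card_piFinset]
    rw [hpfcard] at htot
    rw [hJ]
    clear hpfcard part1 hT hTcard hq hJ J T
    generalize ((Fintype.piFinset fun _ : Fin n => Finset.range q).filter
        (fun j => q ≤ ∑ ℓ, j ℓ)).card = A at htot ⊢
    generalize ((Fintype.piFinset fun _ : Fin n => Finset.range q).filter
        (fun j => ∑ ℓ, j ℓ < q)).card = B at htot hBle
    omega
  -- injection from T ×ˢ J into Rset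
  have hmain : T.card * J.card ≤ (Rset q (d : ℤ) s n).card := by
    rw [← Finset.card_product]
    apply Finset.card_le_card_of_injOn (fun p => fun ℓ => p.2 ℓ + q * p.1 ℓ)
    · intro p hp
      rw [Finset.mem_coe, Finset.mem_product] at hp
      obtain ⟨hpt, hpj⟩ := hp
      rw [hT, Finset.mem_piAntidiag] at hpt
      rw [hJ, Finset.mem_filter, Fintype.mem_piFinset] at hpj
      exact part1 p.2 p.1 (fun ℓ => Finset.mem_range.mp (hpj.1 ℓ)) hpj.2 hpt.1
    · intro a ha b hb hab
      simp only [Finset.coe_product, Set.mem_prod, Finset.mem_coe, hJ, Finset.mem_filter,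
        Fintype.mem_piFinset] at ha hb
      have haq : ∀ ℓ, a.2 ℓ < q := fun ℓ => Finset.mem_range.mp (ha.2.1 ℓ)
      have hbq : ∀ ℓ, b.2 ℓ < q := fun ℓ => Finset.mem_range.mp (hb.2.1 ℓ)
      have key : ∀ ℓ, a.2 ℓ + q * a.1 ℓ = b.2 ℓ + q * b.1 ℓ := fun ℓ => congrFun hab ℓ
      have h2 : a.2 = b.2 := by
        funext ℓ
        have := key ℓ
        calc a.2 ℓ = (a.2 ℓ + q * a.1 ℓ) % q := by
              rw [Nat.add_mul_mod_self_left, Nat.mod_eq_of_lt (haq ℓ)]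
          _ = (b.2 ℓ + q * b.1 ℓ) % q := by rw [this]
          _ = b.2 ℓ := by rw [Nat.add_mul_mod_self_left, Nat.mod_eq_of_lt (hbq ℓ)]
      have h1 : a.1 = b.1 := by
        funext ℓ
        have := key ℓ
        calc a.1 ℓ = (a.2 ℓ + q * a.1 ℓ) / q := by
              rw [Nat.add_mul_div_left _ _ hq0, Nat.div_eq_of_lt (haq ℓ), Nat.zero_add]
          _ = (b.2 ℓ + q * b.1 ℓ) / q := by rw [this]
          _ = b.1 ℓ := by
              rw [Nat.add_mul_div_left _ _ hq0, Nat.div_eq_of_lt (hbq ℓ), Nat.zero_add]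
      exact Prod.ext h1 h2
  calc (n + s - 2).choose (n - 1) * (q ^ n - (n + q - 1).choose n)
      ≤ T.card * J.card := by rw [hTcard]; exact Nat.mul_le_mul_left _ hJcard
    _ ≤ (Rset q (d : ℤ) s n).card := hmain
end

section
/- Let d, s ∈ N with d < sq, let m = (m_{\vec{j}})_{\vec{j}∈I_{d,n}} ∈ F_q^{|I_{d,n}|}, and let F_C ∈ F_q[X]_{C_{s,n}} be the unique polynomial with E(F_C,\vec{j}) = m_{\vec{j}} for \vec{j}∈I_{d,n} and E(F_C,\vec{j}) = 0 for \vec{j}∈R_{d,s,n}. Write F_C = F_I - F_R where F_I collects the Newton-basis terms of F_C indexed by I_{d,n} and -F_R those indexed by R_{d,s,n}. Then F_I has total degree at most d, E(F_I,\vec{j}) = m_{\vec{j}} for all \vec{j} ∈ I_{d,n}, and E(F_I,\vec{j}) = E(F_R,\vec{j}) for all \vec{j} ∈ R_{d,s,n}. -/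
open MvPolynomial

section aux
variable {F : Type*} [Field F] {n : ℕ}

lemma Eev_sum (α : ℕ → F) (q : ℕ) {ι : Type*} (t : Finset ι)
    (f : ι → MvPolynomial (Fin n) F) (j : Fin n → ℕ) :
    Eev α q (∑ i ∈ t, f i) j = ∑ i ∈ t, Eev α q (f i) j := by
  simp only [Eev, mvHasseDeriv, ← MvPolynomial.coe_eval₂Hom, map_sum,
    MvPolynomial.coeff_sum]

lemma Eev_add (α : ℕ → F) (q : ℕ) (f g : MvPolynomial (Fin n) F) (j : Fin n → ℕ) :
    Eev α q (f + g) j = Eev α q f j + Eev α q g j := by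
  simp only [Eev, mvHasseDeriv, ← MvPolynomial.coe_eval₂Hom, map_add,
    MvPolynomial.coeff_add]

lemma Eev_neg (α : ℕ → F) (q : ℕ) (f : MvPolynomial (Fin n) F) (j : Fin n → ℕ) :
    Eev α q (-f) j = -Eev α q f j := by
  simp only [Eev, mvHasseDeriv, ← MvPolynomial.coe_eval₂Hom, map_neg,
    MvPolynomial.coeff_neg]

lemma Eev_smul (α : ℕ → F) (q : ℕ) (r : F) (f : MvPolynomial (Fin n) F) (j : Fin n → ℕ) :
    Eev α q (r • f) j = r * Eev α q f j := by
  rw [MvPolynomial.smul_eq_C_mul]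
  simp only [Eev, mvHasseDeriv, ← MvPolynomial.coe_eval₂Hom, map_mul,
    MvPolynomial.eval₂Hom_C, RingHom.comp_apply, MvPolynomial.coeff_C_mul,
    MvPolynomial.eval_C]

lemma mvHasseDeriv_mul' (s : Fin n →₀ ℕ) (f g : MvPolynomial (Fin n) F) :
    mvHasseDeriv s (f * g) =
      ∑ p ∈ Finset.HasAntidiagonal.antidiagonal s, mvHasseDeriv p.1 f * mvHasseDeriv p.2 g := by
  simp only [mvHasseDeriv, ← MvPolynomial.coe_eval₂Hom, map_mul, MvPolynomial.coeff_mul]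

lemma eval_mvHasseDeriv_pow (ℓ₀ : Fin n) (a : F) (k : ℕ) (u : Fin n →₀ ℕ) (hu : u ℓ₀ ≤ k)
    (x : Fin n → F) (hx : x ℓ₀ = a) :
    MvPolynomial.eval x (mvHasseDeriv u ((X ℓ₀ - C a) ^ (k + 1))) = 0 := by
  classical
  simp only [mvHasseDeriv, ← MvPolynomial.coe_eval₂Hom, map_pow, map_sub,
    MvPolynomial.eval₂Hom_X', MvPolynomial.eval₂Hom_C, RingHom.comp_apply]
  have h1 : (C (X ℓ₀) + X ℓ₀ - C (C a) :
      MvPolynomial (Fin n) (MvPolynomial (Fin n) F)) = X ℓ₀ + C (X ℓ₀ - C a) := by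
    rw [map_sub]; ring
  rw [h1, add_pow, MvPolynomial.coeff_sum, map_sum]
  apply Finset.sum_eq_zero
  intro r hr
  have h2 : (X ℓ₀ ^ r * C (X ℓ₀ - C a) ^ (k + 1 - r) * ((k + 1).choose r :
      MvPolynomial (Fin n) (MvPolynomial (Fin n) F)))
      = X ℓ₀ ^ r * C ((X ℓ₀ - C a) ^ (k + 1 - r) * ((k + 1).choose r :
        MvPolynomial (Fin n) F)) := by
    rw [← map_pow (C : MvPolynomial (Fin n) F →+* MvPolynomial (Fin n)
      (MvPolynomial (Fin n) F)), ← map_natCast (C : MvPolynomial (Fin n) F →+*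
      MvPolynomial (Fin n) (MvPolynomial (Fin n) F)) ((k+1).choose r),
      mul_assoc, ← map_mul]
  rw [h2, mul_comm (X ℓ₀ ^ r), MvPolynomial.coeff_C_mul, MvPolynomial.coeff_X_pow]
  by_cases h : Finsupp.single ℓ₀ r = u
  · have hrk : r ≤ k := by
      have := congrArg (fun v => v ℓ₀) h
      simp only [Finsupp.single_eq_same] at this
      omega
    have : k + 1 - r = (k - r) + 1 := by omega
    simp [this, hx, if_pos h]
  · simp [if_neg h]

lemma Eev_Nvec_eq_zero (α : ℕ → F) {q : ℕ} (hq0 : 0 < q) (i j : Fin n → ℕ)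
    (ℓ₀ : Fin n) (hlt : j ℓ₀ < i ℓ₀) : Eev α q (Nvec α q i) j = 0 := by
  classical
  set a := α (j ℓ₀ % q) with ha
  set k := j ℓ₀ / q with hk
  have hdvd : (X ℓ₀ - C a) ^ (k + 1) ∣ Nvec α q i := by
    have h1 : (X ℓ₀ - C a) ^ (k + 1) ∣
        ∏ t ∈ Finset.range (i ℓ₀), (X ℓ₀ - C (α (t % q)) : MvPolynomial (Fin n) F) := by
      set T := (Finset.range (k + 1)).image (fun r => j ℓ₀ % q + r * q) with hT
      have hsub : T ⊆ Finset.range (i ℓ₀) := by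
        intro t ht
        rw [hT, Finset.mem_image] at ht
        obtain ⟨r, hr, rfl⟩ := ht
        rw [Finset.mem_range] at hr ⊢
        have h2 : j ℓ₀ % q + r * q ≤ j ℓ₀ % q + k * q :=
          Nat.add_le_add_left (Nat.mul_le_mul_right q (by omega)) _
        have h3 : j ℓ₀ % q + k * q = j ℓ₀ := by
          rw [hk, Nat.mul_comm]; exact Nat.mod_add_div _ _
        omega
      have hprodT : ∏ t ∈ T, (X ℓ₀ - C (α (t % q)) : MvPolynomial (Fin n) F)
          = (X ℓ₀ - C a) ^ (k + 1) := by
        rw [hT, Finset.prod_image]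
        · rw [Finset.prod_congr rfl (fun r _ => ?_), Finset.prod_const, Finset.card_range]
          rw [Nat.add_mul_mod_self_right, Nat.mod_mod_of_dvd _ dvd_rfl, ha]
        · intro x _ y _ hxy
          have : x * q = y * q := by simp only at hxy; omega
          exact Nat.eq_of_mul_eq_mul_right hq0 this
      rw [← hprodT]
      exact Finset.prod_dvd_prod_of_subset _ _ _ hsub
    exact h1.trans (Finset.dvd_prod_of_mem _ (Finset.mem_univ ℓ₀))
  obtain ⟨g, hg⟩ := hdvd
  rw [Eev, hg, mvHasseDeriv_mul', map_sum]
  apply Finset.sum_eq_zero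
  intro p hp
  rw [map_mul]
  have hps := Finset.HasAntidiagonal.mem_antidiagonal.mp hp
  have hps1 : p.1 ℓ₀ ≤ k := by
    have := congrArg (fun v => v ℓ₀) hps
    simp only [Finsupp.add_apply, Finsupp.coe_equivFunOnFinite_symm] at this
    omega
  rw [eval_mvHasseDeriv_pow ℓ₀ a k p.1 hps1 _ rfl, zero_mul]

lemma Nvec_totalDegree (α : ℕ → F) (q : ℕ) (i : Fin n → ℕ) :
    (Nvec α q i).totalDegree ≤ ∑ ℓ, i ℓ := by
  refine (MvPolynomial.totalDegree_finset_prod _ _).trans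
    (Finset.sum_le_sum fun ℓ _ => ?_)
  refine (MvPolynomial.totalDegree_finset_prod _ _).trans ?_
  calc ∑ t ∈ Finset.range (i ℓ), (X ℓ - C (α (t % q)) : MvPolynomial (Fin n) F).totalDegree
      ≤ ∑ _t ∈ Finset.range (i ℓ), 1 := by
        refine Finset.sum_le_sum fun t _ => ?_
        rw [sub_eq_add_neg, ← map_neg C]
        refine (MvPolynomial.totalDegree_add _ _).trans ?_
        simp [MvPolynomial.totalDegree_X, MvPolynomial.totalDegree_C]
    _ = i ℓ := by simp

end aux

theorem stmt19 {F : Type*} [Field F] [Fintype F] (q : ℕ) (hq : Fintype.card F = q)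
    (α : ℕ → F) (hinj : ∀ a < q, ∀ b < q, α a = α b → a = b)
    {n : ℕ} (d s : ℕ) (hd : d < s * q)
    (m : (Fin n → ℕ) → F) (c : (Fin n → ℕ) → F)
    (P : MvPolynomial (Fin n) F)
    (hPdef : P = ∑ i ∈ Cset q s n, c i • Nvec α q i)
    (hPm : ∀ j ∈ (Cset q s n).filter (fun v => (∑ ℓ, v ℓ) ≤ d), Eev α q P j = m j)
    (hPr : ∀ j ∈ Rset q (d : ℤ) s n, Eev α q P j = 0) :
    (∑ i ∈ (Cset q s n).filter (fun v => (∑ ℓ, v ℓ) ≤ d), c i • Nvec α q i).totalDegree ≤ d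
    ∧ (∀ j ∈ (Cset q s n).filter (fun v => (∑ ℓ, v ℓ) ≤ d),
        Eev α q (∑ i ∈ (Cset q s n).filter (fun v => (∑ ℓ, v ℓ) ≤ d), c i • Nvec α q i) j
          = m j)
    ∧ ∀ j ∈ Rset q (d : ℤ) s n,
        Eev α q (∑ i ∈ (Cset q s n).filter (fun v => (∑ ℓ, v ℓ) ≤ d), c i • Nvec α q i) j
          = Eev α q (-∑ i ∈ Rset q (d : ℤ) s n, c i • Nvec α q i) j := by
  classical
  have hq0 : 0 < q := by
    rcases Nat.eq_zero_or_pos q with h | h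
    · subst h; simp at hd
    · exact h
  have key : ∀ v : Fin n → ℕ, ((d : ℤ) < ∑ ℓ, (v ℓ : ℤ)) ↔ ¬ (∑ ℓ, v ℓ) ≤ d := by
    intro v
    rw [← Nat.cast_sum]
    omega
  have hRset : Rset q (d : ℤ) s n
      = (Cset q s n).filter (fun v => ¬ (∑ ℓ, v ℓ) ≤ d) := by
    unfold Rset
    exact Finset.filter_congr fun v _ => key v
  have hsplit : P = (∑ i ∈ (Cset q s n).filter (fun v => (∑ ℓ, v ℓ) ≤ d), c i • Nvec α q i)
      + ∑ i ∈ Rset q (d : ℤ) s n, c i • Nvec α q i := by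
    rw [hPdef, hRset, Finset.sum_filter_add_sum_filter_not]
  have hzero : ∀ j' : Fin n → ℕ, (∑ ℓ, j' ℓ) ≤ d →
      Eev α q (∑ i ∈ Rset q (d : ℤ) s n, c i • Nvec α q i) j' = 0 := by
    intro j' hj'
    rw [Eev_sum]
    refine Finset.sum_eq_zero fun i hi => ?_
    rw [Eev_smul]
    obtain ⟨ℓ₀, h⟩ : ∃ ℓ₀, j' ℓ₀ < i ℓ₀ := by
      by_contra hc
      push_neg at hc
      have h1 : (d : ℤ) < ∑ ℓ, (i ℓ : ℤ) := (Finset.mem_filter.mp hi).2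
      rw [key] at h1
      exact h1 (le_trans (Finset.sum_le_sum fun ℓ _ => hc ℓ) hj')
    rw [Eev_Nvec_eq_zero α hq0 i j' ℓ₀ h, mul_zero]
  refine ⟨?_, ?_, ?_⟩
  · refine (MvPolynomial.totalDegree_finset_sum _ _).trans (Finset.sup_le fun i hi => ?_)
    refine (MvPolynomial.totalDegree_smul_le _ _).trans
      ((Nvec_totalDegree α q i).trans ?_)
    exact (Finset.mem_filter.mp hi).2
  · intro j hj
    have h1 := hPm j hj
    rw [hsplit, Eev_add, hzero j (Finset.mem_filter.mp hj).2, add_zero] at h1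
    exact h1
  · intro j hj
    have h0 := hPr j hj
    rw [hsplit, Eev_add] at h0
    rw [Eev_neg]
    exact eq_neg_of_add_eq_zero_left h0
end
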